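/- For n×n max-plus matrices A and B (n ≥ 1), the following are equivalent: A = B, and for every x : Fin n → ℝ and every i : Fin n, max over j : Fin n of (A i j + (x j : WithBot ℝ)) = max over j : Fin n of (B i j + (x j : WithBot ℝ)). In other words, two max-plus matrices are equal if and only if their max-plus actions agree on all finite real vectors. -/

import Mathlib

private lemma maxplus_key {n : ℕ} (hn : 1 ≤ n)
    (A B : Matrix (Fin n) (Fin n) (WithBot ℝ))
    (h : ∀ (x : Fin n → ℝ) (i : Fin n),
      (Finset.univ.sup fun j => A i j + ((x j : ℝ) : WithBot ℝ)) =
        (Finset.univ.sup fun j => B i j + ((x j : ℝ) : WithBot ℝ)))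
    (i k : Fin n) : A i k ≤ B i k := by
  by_contra hlt
  push_neg at hlt
  obtain ⟨p, hAp, hBp⟩ := WithBot.lt_iff_exists_coe.mp hlt
  have hne : (Finset.univ : Finset (Fin n)).Nonempty := ⟨⟨0, hn⟩, Finset.mem_univ _⟩
  set m : ℝ := Finset.univ.sup' hne (fun j => WithBot.unbotD 0 (B i j)) with hm
  have hmle : ∀ j, B i j ≤ (m : WithBot ℝ) := by
    intro j
    cases hb : B i j with
    | bot => exact bot_le
    | coe b =>
      have h0 : WithBot.unbotD 0 (B i j) ≤ m :=
        Finset.le_sup' (f := fun j => WithBot.unbotD 0 (B i j)) (Finset.mem_univ j)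
      rw [hb] at h0
      exact_mod_cast h0
  set t : ℝ := (m - p) / 2 + 1 with ht
  have hmt : m - t < p + t := by rw [ht]; linarith
  set x : Fin n → ℝ := fun j => if j = k then t else -t with hx
  have hE := h x i
  have hL : ((p + t : ℝ) : WithBot ℝ) ≤
      Finset.univ.sup fun j => A i j + ((x j : ℝ) : WithBot ℝ) := by
    have h1 := Finset.le_sup (f := fun j => A i j + ((x j : ℝ) : WithBot ℝ))
      (Finset.mem_univ k)
    refine le_trans ?_ h1
    simp [hx, hAp, ← WithBot.coe_add]
  have hR : (Finset.univ.sup fun j => B i j + ((x j : ℝ) : WithBot ℝ)) <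
      ((p + t : ℝ) : WithBot ℝ) := by
    rw [Finset.sup_lt_iff (by exact bot_lt_iff_ne_bot.mpr (by simp))]
    intro j _
    by_cases hjk : j = k
    · subst hjk
      have hstep : B i j + (t : WithBot ℝ) < (p : WithBot ℝ) + (t : WithBot ℝ) := by
        cases hb : B i j with
        | bot =>
          rw [WithBot.bot_add, ← WithBot.coe_add]
          exact WithBot.bot_lt_coe _
        | coe b =>
          rw [hb] at hBp
          have hbp : b < p := by exact_mod_cast hBp
          rw [← WithBot.coe_add, ← WithBot.coe_add]
          exact_mod_cast add_lt_add_left hbp t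
      simpa [hx, WithBot.coe_add] using hstep
    · have h1 : B i j + ((x j : ℝ) : WithBot ℝ) ≤ (m : WithBot ℝ) + ((-t : ℝ) : WithBot ℝ) := by
        simp only [hx, if_neg hjk]
        exact add_le_add_left (hmle j) _
      have h3 : (m : WithBot ℝ) + ((-t : ℝ) : WithBot ℝ) = ((m - t : ℝ) : WithBot ℝ) := by
        rw [← WithBot.coe_add]; exact congrArg _ (by ring)
      have h4 : ((m - t : ℝ) : WithBot ℝ) < ((p + t : ℝ) : WithBot ℝ) := by exact_mod_cast hmt
      exact lt_of_le_of_lt (h1.trans h3.le) h4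
  rw [hE] at hL
  exact absurd (hL.trans_lt hR) (lt_irrefl _)

/-- Two max-plus matrices are equal iff their max-plus actions agree on all
finite real vectors. -/
theorem maxplus_matrix_ext {n : ℕ} (hn : 1 ≤ n)
    (A B : Matrix (Fin n) (Fin n) (WithBot ℝ)) :
    A = B ↔ ∀ (x : Fin n → ℝ) (i : Fin n),
      (Finset.univ.sup fun j => A i j + ((x j : ℝ) : WithBot ℝ)) =
        (Finset.univ.sup fun j => B i j + ((x j : ℝ) : WithBot ℝ)) := by
  constructor
  · rintro rfl x i; rfl
  · intro h
    funext i k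
    exact le_antisymm (maxplus_key hn A B h i k)
      (maxplus_key hn B A (fun x i => (h x i).symm) i k)
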